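/- arXiv:1106.2753 — 3 statements merged into one kernel-verified Lean document; each statement's English description precedes it below -/
import Mathlib

section
/- If (q)_∞ = ∏_{k=1}^∞ (1 - q^k) = ∑_n b_n q^n, then ∑_{m≥0} b_{7m+2} q^m = -∏_{k=1}^∞ (1 - q^{7k}). -/
open PowerSeries Finset

set_option linter.unusedVariables false
set_option linter.unusedSectionVars false

/-- `(q^d)_∞ = ∏_{k≥1} (1 - q^{dk})` as a formal power series over `ℤ`:
its `m`-th coefficient is that of the partial product over `k = 1, …, m+1`,
which stabilizes since the omitted factors only affect degrees `> m`. -/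
noncomputable def E (d : ℕ) : PowerSeries ℤ :=
  PowerSeries.mk fun m =>
    PowerSeries.coeff m
      (∏ k ∈ Finset.range (m + 1), (1 - (PowerSeries.X : PowerSeries ℤ) ^ (d * (k + 1))))

namespace PentAux

noncomputable def MM (S : Finset ℕ) : ℕ := S.sup id
noncomputable def mm (S : Finset ℕ) : ℕ := sInf (S : Set ℕ)
noncomputable def sg (S : Finset ℕ) : ℕ :=
  Nat.findGreatest (fun t => Finset.Icc (MM S + 1 - t) (MM S) ⊆ S) (MM S)
noncomputable def phiA (S : Finset ℕ) : Finset ℕ :=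
  ((S.erase (mm S)) \ Finset.Icc (MM S + 1 - mm S) (MM S)) ∪
    Finset.Icc (MM S + 2 - mm S) (MM S + 1)
noncomputable def phiB (S : Finset ℕ) : Finset ℕ :=
  ((S \ Finset.Icc (MM S + 1 - sg S) (MM S)) ∪ Finset.Icc (MM S - sg S) (MM S - 1)) ∪ {sg S}
noncomputable def phi (S : Finset ℕ) : Finset ℕ :=
  if mm S ≤ sg S then phiA S else phiB S
def IsExc (S : Finset ℕ) : Prop :=
  S = Finset.Icc (mm S) (MM S) ∧ (MM S + 1 = 2 * mm S ∨ MM S + 2 = 2 * mm S)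
noncomputable instance : DecidablePred IsExc := fun S => by unfold IsExc; infer_instance
def D (n : ℕ) : Finset (Finset ℕ) :=
  (Finset.Icc 1 n).powerset.filter (fun S => ∑ x ∈ S, x = n)
noncomputable def cD (n : ℕ) : ℤ := ∑ S ∈ D n, (-1) ^ S.card

lemma MM_mem {S : Finset ℕ} (h : S.Nonempty) : MM S ∈ S := by
  obtain ⟨b, hb, he⟩ := Finset.exists_mem_eq_sup S h id
  simpa [MM, he] using hb
lemma le_MM {S : Finset ℕ} {x : ℕ} (hx : x ∈ S) : x ≤ MM S := Finset.le_sup (f := id) hx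
lemma mm_mem {S : Finset ℕ} (h : S.Nonempty) : mm S ∈ S := by
  have : (S : Set ℕ).Nonempty := by exact_mod_cast h
  simpa [mm] using Nat.sInf_mem this
lemma mm_le {S : Finset ℕ} {x : ℕ} (hx : x ∈ S) : mm S ≤ x := Nat.sInf_le (by exact_mod_cast hx)

lemma one_le_MM {S : Finset ℕ} (h : S.Nonempty) (h0 : 0 ∉ S) : 1 ≤ MM S := by
  have := MM_mem h
  rcases Nat.eq_zero_or_pos (MM S) with hz | hp
  · rw [hz] at this; exact absurd this h0
  · exact hp

lemma sg_pos {S : Finset ℕ} (h : S.Nonempty) (h0 : 0 ∉ S) : 1 ≤ sg S := by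
  apply Nat.le_findGreatest (one_le_MM h h0)
  intro x hx
  rw [Finset.mem_Icc] at hx
  have : x = MM S := by omega
  rw [this]; exact MM_mem h

lemma sg_le (S : Finset ℕ) : sg S ≤ MM S := Nat.findGreatest_le _

lemma run_subset {S : Finset ℕ} (h : S.Nonempty) (h0 : 0 ∉ S) :
    Finset.Icc (MM S + 1 - sg S) (MM S) ⊆ S := by
  unfold sg
  have hp : Finset.Icc (MM S + 1 - 1) (MM S) ⊆ S := by
    intro x hx
    rw [Finset.mem_Icc] at hx
    have : x = MM S := by omega
    rw [this]; exact MM_mem h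
  exact Nat.findGreatest_spec (P := fun t => Finset.Icc (MM S + 1 - t) (MM S) ⊆ S)
    (one_le_MM h h0) hp

lemma sub_run_not_mem {S : Finset ℕ} (h : S.Nonempty) (h0 : 0 ∉ S) :
    MM S - sg S ∉ S := by
  rcases eq_or_lt_of_le (sg_le S) with he | hlt
  · rw [he]; simpa using h0
  · intro hmem
    have hng : ¬ (Finset.Icc (MM S + 1 - (sg S + 1)) (MM S) ⊆ S) := by
      unfold sg at hlt ⊢
      exact Nat.findGreatest_is_greatest (P := fun t => Finset.Icc (MM S + 1 - t) (MM S) ⊆ S) (n := MM S)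
        (by omega) (by omega)
    apply hng
    intro x hx
    rw [Finset.mem_Icc] at hx
    rcases Nat.eq_or_lt_of_le hx.1 with he2 | hlt2
    · rw [← he2]
      have : MM S + 1 - (sg S + 1) = MM S - sg S := by omega
      rw [this]; exact hmem
    · exact run_subset h h0 (by rw [Finset.mem_Icc]; omega)

lemma mm_le_run_bot {S : Finset ℕ} (h : S.Nonempty) (h0 : 0 ∉ S) :
    mm S ≤ MM S + 1 - sg S := by
  apply mm_le
  have h1 := sg_pos h h0
  have h2 := sg_le S
  exact run_subset h h0 (by rw [Finset.mem_Icc]; omega)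


lemma mem_D {n : ℕ} {S : Finset ℕ} :
    S ∈ D n ↔ S ⊆ Finset.Icc 1 n ∧ ∑ x ∈ S, x = n := by
  simp [D]

lemma nonempty_of_mem_D {n : ℕ} (hn : 1 ≤ n) {S : Finset ℕ} (hS : S ∈ D n) : S.Nonempty := by
  rcases mem_D.mp hS with ⟨_, hsum⟩
  rcases S.eq_empty_or_nonempty with rfl | h
  · simp at hsum; omega
  · exact h

lemma sum_image_succ (A : Finset ℕ) :
    ∑ x ∈ A.image (· + 1), x = (∑ x ∈ A, x) + A.card := by
  rw [Finset.sum_image (by intro x _ y _ h; simp only at h; omega)]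
  simp [Finset.sum_add_distrib]

theorem caseA {n : ℕ} {S : Finset ℕ} (hn : 1 ≤ n) (hS : S ∈ D n)
    (hE : ¬IsExc S) (hA : mm S ≤ sg S) :
    phiA S ∈ D n ∧ ¬IsExc (phiA S) ∧ sg (phiA S) < mm (phiA S) ∧
      phiB (phiA S) = S ∧ (phiA S).card + 1 = S.card := by
  obtain ⟨hsub, hsum⟩ := mem_D.mp hS
  have hne : S.Nonempty := nonempty_of_mem_D hn hS
  have h0 : 0 ∉ S := fun h => by have := hsub h; rw [Finset.mem_Icc] at this; omega
  have hs1 : 1 ≤ mm S := by have := hsub (mm_mem hne); rw [Finset.mem_Icc] at this; exact this.1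
  have hsM : mm S ≤ MM S := mm_le (MM_mem hne)
  have hσ1 : 1 ≤ sg S := sg_pos hne h0
  have hσM : sg S ≤ MM S := sg_le S
  have hbot : mm S ≤ MM S + 1 - sg S := mm_le_run_bot hne h0
  have hrun := run_subset hne h0
  -- notation
  set M := MM S with hM
  set s := mm S with hs
  set σ := sg S with hσ
  -- step 1 : 2s ≤ M
  have h2s : 2 * s ≤ M := by
    by_contra hcon
    push_neg at hcon
    have hSI : S = Finset.Icc s M := by
      apply Finset.Subset.antisymm
      · intro x hx; rw [Finset.mem_Icc]; exact ⟨mm_le hx, le_MM hx⟩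
      · intro x hx
        rw [Finset.mem_Icc] at hx
        exact hrun (by rw [Finset.mem_Icc]; omega)
    have hσ2 : M + 1 - s ≤ σ := by
      rw [hσ]; unfold sg
      apply Nat.le_findGreatest (by rw [← hM]; omega)
      rw [← hM]
      intro x hx
      rw [Finset.mem_Icc] at hx
      rw [hSI, Finset.mem_Icc]; omega
    exact hE ⟨hSI, by omega⟩
  -- basic interval facts
  set R : Finset ℕ := Finset.Icc (M + 1 - s) M with hR
  set R' : Finset ℕ := Finset.Icc (M + 2 - s) (M + 1) with hR'
  have hRS : R ⊆ S := by
    intro x hx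
    rw [hR, Finset.mem_Icc] at hx
    exact hrun (by rw [Finset.mem_Icc]; omega)
  have hRerase : R ⊆ S.erase s := by
    intro x hx
    have hx2 := hx
    rw [hR, Finset.mem_Icc] at hx2
    exact Finset.mem_erase.mpr ⟨by omega, hRS hx⟩
  set T : Finset ℕ := (S.erase s) \ R with hT
  have hTfact : ∀ x ∈ T, x ∈ S ∧ s + 1 ≤ x ∧ x ≤ M - s := by
    intro x hx
    rw [hT, Finset.mem_sdiff, Finset.mem_erase] at hx
    obtain ⟨⟨hxs, hxS⟩, hxR⟩ := hx
    rw [hR, Finset.mem_Icc] at hxR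
    have h1 := mm_le hxS
    have h2 := le_MM hxS
    rw [← hs] at h1
    rw [← hM] at h2
    refine ⟨hxS, by omega, by omega⟩
  have hphiA : phiA S = T ∪ R' := rfl
  have hdisj : Disjoint T R' := by
    rw [Finset.disjoint_left]
    intro x hxT hxR'
    rw [hR', Finset.mem_Icc] at hxR'
    have := hTfact x hxT
    omega
  have hcardR : R.card = s := by rw [hR, Nat.card_Icc]; omega
  have hcardR' : R'.card = s := by rw [hR', Nat.card_Icc]; omega
  -- pair bound : s + M ≤ n
  have hpairle : s + M ≤ n := by
    have hp : ({s, M} : Finset ℕ) ⊆ S := by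
      intro x hx
      rw [Finset.mem_insert, Finset.mem_singleton] at hx
      rcases hx with rfl | rfl
      · exact mm_mem hne
      · exact MM_mem hne
    have h2 : (∑ x ∈ ({s, M} : Finset ℕ), x) ≤ ∑ x ∈ S, x :=
      Finset.sum_le_sum_of_subset hp
    rw [Finset.sum_pair (by omega : s ≠ M)] at h2
    omega
  -- cards
  have hcardT : T.card + s = S.card - 1 := by
    have hle : s ≤ (S.erase s).card := by
      have := Finset.card_le_card hRerase
      rw [hcardR] at this; exact this
    rw [hT, Finset.card_sdiff_of_subset hRerase, hcardR, Finset.card_erase_of_mem (mm_mem hne)]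
    rw [Finset.card_erase_of_mem (mm_mem hne)] at hle
    omega
  have hcardS : 1 ≤ S.card := Finset.card_pos.mpr hne
  have hcard : (phiA S).card + 1 = S.card := by
    rw [hphiA, Finset.card_union_of_disjoint hdisj, hcardR']
    omega
  -- sums
  have hsumR' : ∑ x ∈ R', x = (∑ x ∈ R, x) + s := by
    have himg : R' = R.image (· + 1) := by
      rw [hR, hR', Finset.image_add_right_Icc]
      congr 1
      omega
    rw [himg, sum_image_succ, hcardR]
  have h1 : (∑ x ∈ S.erase s \ R, x) + ∑ x ∈ R, x = ∑ x ∈ S.erase s, x :=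
    Finset.sum_sdiff hRerase
  have h2 : (∑ x ∈ S.erase s, x) + s = ∑ x ∈ S, x := by
    have := Finset.sum_erase_add S (fun x => x) (mm_mem hne)
    exact this
  have hsumT : (∑ x ∈ T, x) + ∑ x ∈ R, x = n - s := by rw [hT]; omega
  have hsle : s + (∑ x ∈ T, x) + ∑ x ∈ R, x ≤ n := by rw [hT]; omega
  have hsumphi : ∑ x ∈ phiA S, x = n := by
    rw [hphiA, Finset.sum_union hdisj, hsumR']
    omega
  -- membership
  have hsubphi : phiA S ⊆ Finset.Icc 1 n := by
    rw [hphiA]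
    intro x hx
    rw [Finset.mem_union] at hx
    rw [Finset.mem_Icc]
    rcases hx with hx | hx
    · have := hTfact x hx
      omega
    · rw [hR', Finset.mem_Icc] at hx
      omega
  have hmemD : phiA S ∈ D n := mem_D.mpr ⟨hsubphi, hsumphi⟩
  -- new max
  have hphine : (phiA S).Nonempty := by
    refine ⟨M + 1, ?_⟩
    rw [hphiA, Finset.mem_union, hR']
    right; rw [Finset.mem_Icc]; omega
  have hMmem' : M + 1 ∈ phiA S := by
    rw [hphiA, Finset.mem_union, hR']
    right; rw [Finset.mem_Icc]; omega
  have hballphi : ∀ x ∈ phiA S, s + 1 ≤ x ∧ x ≤ M + 1 := by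
    intro x hx
    rw [hphiA, Finset.mem_union] at hx
    rcases hx with hx | hx
    · have := hTfact x hx; omega
    · rw [hR', Finset.mem_Icc] at hx; omega
  have hM' : MM (phiA S) = M + 1 := by
    apply le_antisymm
    · exact Finset.sup_le (fun x hx => (hballphi x hx).2)
    · exact le_MM hMmem'
  have hm' : s + 1 ≤ mm (phiA S) := (hballphi _ (mm_mem hphine)).1
  -- the key hole : M + 1 - s is not in phiA S
  have hhole : M + 1 - s ∉ phiA S := by
    rw [hphiA, Finset.mem_union]
    rintro (hx | hx)
    · rw [hT, Finset.mem_sdiff] at hx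
      exact hx.2 (by rw [hR, Finset.mem_Icc]; omega)
    · rw [hR', Finset.mem_Icc] at hx; omega
  -- new run length
  have hsg' : sg (phiA S) = s := by
    apply le_antisymm
    · by_contra hcon
      push_neg at hcon
      have hP : Finset.Icc (MM (phiA S) + 1 - sg (phiA S)) (MM (phiA S)) ⊆ phiA S := by
        unfold sg
        apply Nat.findGreatest_spec (P := fun t => Finset.Icc (MM (phiA S) + 1 - t) (MM (phiA S)) ⊆ phiA S)
          (m := 1)
        · rw [hM']; omega
        · intro x hx
          rw [Finset.mem_Icc] at hx
          have : x = MM (phiA S) := by omega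
          rw [this, hM']; exact hMmem'
      apply hhole
      apply hP
      rw [Finset.mem_Icc, hM']
      omega
    · unfold sg
      apply Nat.le_findGreatest (by rw [hM'];  omega)
      intro x hx
      rw [Finset.mem_Icc, hM'] at hx
      rw [hphiA, Finset.mem_union]
      right
      rw [hR', Finset.mem_Icc]
      omega
  have hcaseB' : sg (phiA S) < mm (phiA S) := by omega
  -- not exceptional
  have hnotexc : ¬IsExc (phiA S) := by
    rintro ⟨hI, hd⟩
    have hmm'le : mm (phiA S) ≤ M + 1 := mm_le hMmem'
    have : M + 2 - s ≤ mm (phiA S) := by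
      by_contra hcon
      push_neg at hcon
      apply hhole
      rw [hI, Finset.mem_Icc, hM']
      omega
    rw [hM'] at hd
    omega
  -- inverse
  have hinv : phiB (phiA S) = S := by
    have e1 : MM (phiA S) + 1 - sg (phiA S) = M + 2 - s := by omega
    have e2 : MM (phiA S) - sg (phiA S) = M + 1 - s := by omega
    have e3 : MM (phiA S) - 1 = M := by omega
    unfold phiB
    rw [e1, e2, e3, hsg', hM', hphiA]
    have h1 : (T ∪ R') \ Finset.Icc (M + 2 - s) (M + 1) = T := by
      rw [← hR', Finset.union_sdiff_distrib, Finset.sdiff_self, Finset.union_empty,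
        Finset.sdiff_eq_self_iff_disjoint]
      exact hdisj
    rw [h1, ← hR]
    rw [hT, Finset.sdiff_union_of_subset hRerase]
    rw [Finset.union_comm, ← Finset.insert_eq, Finset.insert_erase (mm_mem hne)]
  exact ⟨hmemD, hnotexc, hcaseB', hinv, hcard⟩

theorem caseB {n : ℕ} {S : Finset ℕ} (hn : 1 ≤ n) (hS : S ∈ D n)
    (hE : ¬IsExc S) (hB : sg S < mm S) :
    phiB S ∈ D n ∧ ¬IsExc (phiB S) ∧ mm (phiB S) ≤ sg (phiB S) ∧
      phiA (phiB S) = S ∧ (phiB S).card = S.card + 1 := by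
  obtain ⟨hsub, hsum⟩ := mem_D.mp hS
  have hne : S.Nonempty := nonempty_of_mem_D hn hS
  have h0 : 0 ∉ S := fun h => by have := hsub h; rw [Finset.mem_Icc] at this; omega
  have hs1 : 1 ≤ mm S := by have := hsub (mm_mem hne); rw [Finset.mem_Icc] at this; exact this.1
  have hsM : mm S ≤ MM S := mm_le (MM_mem hne)
  have hMn : MM S ≤ n := by
    have := hsub (MM_mem hne); rw [Finset.mem_Icc] at this; exact this.2
  have hσ1 : 1 ≤ sg S := sg_pos hne h0
  have hσM : sg S ≤ MM S := sg_le S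
  have hbot : mm S ≤ MM S + 1 - sg S := mm_le_run_bot hne h0
  have hrun := run_subset hne h0
  have hsubrun := sub_run_not_mem hne h0
  set M := MM S with hM
  set s := mm S with hs
  set σ := sg S with hσ
  -- step 1 : 2σ + 1 ≤ M
  have h2σ : 2 * σ + 1 ≤ M := by
    by_contra hcon
    push_neg at hcon
    have hMeq : M = 2 * σ := by omega
    have hseq : s = M + 1 - σ := by omega
    have hSI : S = Finset.Icc s M := by
      apply Finset.Subset.antisymm
      · intro x hx; rw [Finset.mem_Icc]; exact ⟨mm_le hx, le_MM hx⟩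
      · intro x hx
        rw [Finset.mem_Icc] at hx
        exact hrun (by rw [Finset.mem_Icc]; omega)
    exact hE ⟨hSI, by omega⟩
  set R : Finset ℕ := Finset.Icc (M + 1 - σ) M with hR
  set Rm : Finset ℕ := Finset.Icc (M - σ) (M - 1) with hRm
  set U : Finset ℕ := S \ R with hU
  have hphiB : phiB S = (U ∪ Rm) ∪ {σ} := rfl
  have hUfact : ∀ x ∈ U, x ∈ S ∧ s ≤ x ∧ x ≤ M - σ - 1 := by
    intro x hx
    rw [hU, Finset.mem_sdiff] at hx
    obtain ⟨hxS, hxR⟩ := hx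
    rw [hR, Finset.mem_Icc] at hxR
    have h1 := mm_le hxS
    have h2 := le_MM hxS
    rw [← hs] at h1
    rw [← hM] at h2
    have hxne : x ≠ M - σ := fun he => hsubrun (he ▸ hxS)
    exact ⟨hxS, h1, by omega⟩
  have hcardR : R.card = σ := by rw [hR, Nat.card_Icc]; omega
  have hcardRm : Rm.card = σ := by rw [hRm, Nat.card_Icc]; omega
  have hdisj1 : Disjoint U Rm := by
    rw [Finset.disjoint_left]
    intro x hxU hxRm
    rw [hRm, Finset.mem_Icc] at hxRm
    have := hUfact x hxU
    omega
  have hσnot : σ ∉ U ∪ Rm := by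
    rw [Finset.mem_union]
    rintro (hx | hx)
    · have := hUfact _ hx; omega
    · rw [hRm, Finset.mem_Icc] at hx; omega
  have hdisj2 : Disjoint (U ∪ Rm) ({σ} : Finset ℕ) := by
    rw [Finset.disjoint_singleton_right]; exact hσnot
  have hcardU : U.card + σ = S.card := by
    rw [hU, Finset.card_sdiff_of_subset hrun]
    have h3 : σ ≤ S.card := by
      have := Finset.card_le_card hrun
      omega
    rw [hcardR]
    omega
  have hcard : (phiB S).card = S.card + 1 := by
    rw [hphiB, Finset.card_union_of_disjoint hdisj2,
      Finset.card_union_of_disjoint hdisj1, hcardRm, Finset.card_singleton]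
    omega
  -- sums
  have hsumR : ∑ x ∈ R, x = (∑ x ∈ Rm, x) + σ := by
    have himg : R = Rm.image (· + 1) := by
      rw [hR, hRm, Finset.image_add_right_Icc]
      congr 1 <;> omega
    rw [himg, sum_image_succ, hcardRm]
  have h1 : (∑ x ∈ S \ R, x) + ∑ x ∈ R, x = ∑ x ∈ S, x := Finset.sum_sdiff hrun
  have hsumphi : ∑ x ∈ phiB S, x = n := by
    rw [hphiB, Finset.sum_union hdisj2, Finset.sum_union hdisj1, Finset.sum_singleton]
    rw [hU]
    omega
  have hsubphi : phiB S ⊆ Finset.Icc 1 n := by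
    rw [hphiB]
    intro x hx
    rw [Finset.mem_union, Finset.mem_union] at hx
    rw [Finset.mem_Icc]
    rcases hx with (hx | hx) | hx
    · have h2 := hUfact x hx
      have := hsub h2.1
      rw [Finset.mem_Icc] at this
      omega
    · rw [hRm, Finset.mem_Icc] at hx; omega
    · rw [Finset.mem_singleton] at hx; omega
  have hmemD : phiB S ∈ D n := mem_D.mpr ⟨hsubphi, hsumphi⟩
  -- structure of phiB S
  have hσmem : σ ∈ phiB S := by
    rw [hphiB, Finset.mem_union]
    right; exact Finset.mem_singleton_self σ
  have hphine : (phiB S).Nonempty := ⟨σ, hσmem⟩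
  have hball : ∀ x ∈ phiB S, σ ≤ x ∧ x ≤ M - 1 := by
    intro x hx
    rw [hphiB, Finset.mem_union, Finset.mem_union] at hx
    rcases hx with (hx | hx) | hx
    · have := hUfact x hx; omega
    · rw [hRm, Finset.mem_Icc] at hx; omega
    · rw [Finset.mem_singleton] at hx; omega
  have hMmem' : M - 1 ∈ phiB S := by
    rw [hphiB, Finset.mem_union, Finset.mem_union]
    left; right
    rw [hRm, Finset.mem_Icc]
    omega
  have hM' : MM (phiB S) = M - 1 := by
    apply le_antisymm
    · exact Finset.sup_le (fun x hx => (hball x hx).2)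
    · exact le_MM hMmem'
  have hm' : mm (phiB S) = σ := by
    apply le_antisymm
    · exact mm_le hσmem
    · exact (hball _ (mm_mem hphine)).1
  have hsg'ge : σ ≤ sg (phiB S) := by
    unfold sg
    apply Nat.le_findGreatest (by omega)
    intro x hx
    rw [Finset.mem_Icc, hM'] at hx
    rw [hphiB, Finset.mem_union, Finset.mem_union]
    left; right
    rw [hRm, Finset.mem_Icc]
    omega
  have hcaseA' : mm (phiB S) ≤ sg (phiB S) := by omega
  have hnotexc : ¬IsExc (phiB S) := by
    rintro ⟨hI, hd⟩
    omega
  have hinv : phiA (phiB S) = S := by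
    have e1 : MM (phiB S) + 1 - mm (phiB S) = M - σ := by omega
    have e2 : MM (phiB S) + 2 - mm (phiB S) = M + 1 - σ := by omega
    have e3 : MM (phiB S) + 1 = M := by omega
    unfold phiA
    rw [e1, e2, e3, hM', hm', hphiB]
    have h4 : ((U ∪ Rm) ∪ {σ}).erase σ = U ∪ Rm := by
      rw [Finset.union_comm (U ∪ Rm), ← Finset.insert_eq, Finset.erase_insert hσnot]
    rw [h4, ← hRm]
    have h5 : (U ∪ Rm) \ Rm = U := by
      rw [Finset.union_sdiff_distrib, Finset.sdiff_self, Finset.union_empty,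
        Finset.sdiff_eq_self_iff_disjoint]
      exact hdisj1
    rw [h5, ← hR, hU, Finset.sdiff_union_of_subset hrun]
  exact ⟨hmemD, hnotexc, hcaseA', hinv, hcard⟩


lemma sum_nonexc {n : ℕ} (hn : 1 ≤ n) :
    ∑ S ∈ (D n).filter (fun S => ¬IsExc S), ((-1 : ℤ) ^ S.card) = 0 := by
  apply Finset.sum_involution (g := fun S _ => phi S)
  · intro S hS
    rw [Finset.mem_filter] at hS
    obtain ⟨hD, hE⟩ := hS
    unfold phi
    split_ifs with h
    · obtain ⟨_, _, _, _, hc⟩ := caseA hn hD hE h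
      rw [← hc, pow_succ]; ring
    · obtain ⟨_, _, _, _, hc⟩ := caseB hn hD hE (by omega)
      rw [hc, pow_succ]; ring
  · intro S hS _
    rw [Finset.mem_filter] at hS
    obtain ⟨hD, hE⟩ := hS
    intro heq
    unfold phi at heq
    split_ifs at heq with h
    · obtain ⟨_, _, _, _, hc⟩ := caseA hn hD hE h
      rw [heq] at hc; omega
    · obtain ⟨_, _, _, _, hc⟩ := caseB hn hD hE (by omega)
      rw [heq] at hc; omega
  · intro S hS
    rw [Finset.mem_filter] at hS ⊢
    obtain ⟨hD, hE⟩ := hS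
    unfold phi
    split_ifs with h
    · obtain ⟨h1, h2, _, _, _⟩ := caseA hn hD hE h
      exact ⟨h1, h2⟩
    · obtain ⟨h1, h2, _, _, _⟩ := caseB hn hD hE (by omega)
      exact ⟨h1, h2⟩
  · intro S hS
    rw [Finset.mem_filter] at hS
    obtain ⟨hD, hE⟩ := hS
    unfold phi
    split_ifs with h h2 h2
    · obtain ⟨_, _, h3, h4, _⟩ := caseA hn hD hE h
      omega
    · exact (caseA hn hD hE h).2.2.2.1
    · exact (caseB hn hD hE (by omega)).2.2.2.1
    · obtain ⟨_, _, h3, h4, _⟩ := caseB hn hD hE (by omega)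
      omega

lemma MM_Icc {a b : ℕ} (h : a ≤ b) : MM (Finset.Icc a b) = b := by
  apply le_antisymm
  · exact Finset.sup_le (fun x hx => by rw [Finset.mem_Icc] at hx; exact hx.2)
  · exact le_MM (by rw [Finset.mem_Icc]; omega)

lemma mm_Icc {a b : ℕ} (h : a ≤ b) : mm (Finset.Icc a b) = a := by
  apply le_antisymm
  · exact mm_le (by rw [Finset.mem_Icc]; omega)
  · exact (Finset.mem_Icc.mp (mm_mem (by exact ⟨a, by rw [Finset.mem_Icc]; omega⟩))).1

lemma sum_Icc_mul_two (a b : ℕ) (h : a ≤ b) :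
    (∑ x ∈ Finset.Icc a b, x) * 2 = (a + b) * (b + 1 - a) := by
  rw [← Finset.Ico_add_one_right_eq_Icc, Finset.sum_Ico_eq_sum_range]
  obtain ⟨k, hk⟩ : ∃ k, b + 1 - a = k + 1 := ⟨b - a, by omega⟩
  rw [hk]
  have hsum : ∑ i ∈ Finset.range (k + 1), (a + i)
      = a * (k + 1) + ∑ i ∈ Finset.range (k + 1), i := by
    rw [Finset.sum_add_distrib, Finset.sum_const, Finset.card_range]
    simp [mul_comm]
  rw [hsum]
  have h2 := Finset.sum_range_id_mul_two (k + 1)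
  have hb : b = a + k := by omega
  subst hb
  have h3 : (k + 1) * (k + 1 - 1) = (k+1) * k := by congr 1
  rw [h3] at h2
  have h4 : a + (a + k) = 2 * a + k := by ring
  rw [h4]
  nlinarith [h2]

lemma exc_eq {n : ℕ} (hn : 1 ≤ n) {S : Finset ℕ} (hS : S ∈ D n) (hE : IsExc S) :
    ∃ j, 1 ≤ j ∧ ((2 * n + j = 3 * j * j ∧ S = Finset.Icc j (2 * j - 1)) ∨
      (2 * n = 3 * j * j + j ∧ S = Finset.Icc (j + 1) (2 * j))) := by
  obtain ⟨hsub, hsum⟩ := mem_D.mp hS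
  have hne : S.Nonempty := nonempty_of_mem_D hn hS
  have hs1 : 1 ≤ mm S := by have := hsub (mm_mem hne); rw [Finset.mem_Icc] at this; exact this.1
  have hsM : mm S ≤ MM S := mm_le (MM_mem hne)
  obtain ⟨hI, hd⟩ := hE
  set M := MM S with hM
  set s := mm S with hs
  have h2n : 2 * n = (s + M) * (M + 1 - s) := by
    have := sum_Icc_mul_two s M hsM
    rw [← hI, hsum] at this
    omega
  rcases hd with hd | hd
  · refine ⟨s, hs1, Or.inl ⟨?_, ?_⟩⟩
    · have e1 : M + 1 - s = s := by omega
      have e2 : s + M = 3 * s - 1 := by omega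
      rw [e1, e2] at h2n
      have e3 : (3 * s - 1) * s + s = 3 * s * s := by
        have : 3 * s - 1 + 1 = 3 * s := by omega
        calc (3 * s - 1) * s + s = (3 * s - 1 + 1) * s := by ring
        _ = 3 * s * s := by rw [this]
      omega
    · rw [hI]
      congr 1
      omega
  · have hs2 : 2 ≤ s := by omega
    refine ⟨s - 1, by omega, Or.inr ⟨?_, ?_⟩⟩
    · obtain ⟨j, hj⟩ : ∃ j, s = j + 1 := ⟨s - 1, by omega⟩
      rw [hj]
      simp only [Nat.add_sub_cancel]
      have e1 : M + 1 - s = j := by omega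
      have e2 : s + M = 3 * j + 1 := by omega
      rw [e1, e2] at h2n
      calc 2 * n = (3 * j + 1) * j := h2n
      _ = 3 * j * j + j := by ring
    · rw [hI]
      congr 1 <;> omega

lemma Icc_mem_D {n a b : ℕ} (ha : 1 ≤ a) (hab : a ≤ b) (hsum : (a + b) * (b + 1 - a) = 2 * n) :
    Finset.Icc a b ∈ D n := by
  rw [mem_D]
  have hsum' : ∑ x ∈ Finset.Icc a b, x = n := by
    have := sum_Icc_mul_two a b hab
    omega
  have hbn : b ≤ n := by
    rw [← hsum']
    exact Finset.single_le_sum (f := fun x => x) (fun i _ => Nat.zero_le i)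
      (by rw [Finset.mem_Icc]; omega)
  constructor
  · intro x hx
    rw [Finset.mem_Icc] at hx ⊢
    omega
  · exact hsum'

lemma IsExc_Icc_type1 {j : ℕ} (hj : 1 ≤ j) : IsExc (Finset.Icc j (2 * j - 1)) := by
  constructor
  · rw [mm_Icc (by omega), MM_Icc (by omega)]
  · rw [mm_Icc (by omega), MM_Icc (by omega)]
    omega

lemma IsExc_Icc_type2 {j : ℕ} (hj : 1 ≤ j) : IsExc (Finset.Icc (j + 1) (2 * j)) := by
  constructor
  · rw [mm_Icc (by omega), MM_Icc (by omega)]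
  · rw [mm_Icc (by omega), MM_Icc (by omega)]
    omega


lemma cD_eq_exc {n : ℕ} (hn : 1 ≤ n) :
    cD n = ∑ S ∈ (D n).filter IsExc, (-1 : ℤ) ^ S.card := by
  rw [cD, ← Finset.sum_filter_add_sum_filter_not (D n) IsExc, sum_nonexc hn, add_zero]

lemma cD_zero : cD 0 = 1 := by
  have hD : D 0 = {∅} := by
    apply Finset.ext; intro T
    rw [mem_D, Finset.mem_singleton]
    constructor
    · rintro ⟨hsub, hsum⟩
      rcases T.eq_empty_or_nonempty with rfl | ⟨x, hx⟩
      · rfl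
      · have h1 := hsub hx
        rw [Finset.mem_Icc] at h1
        omega
    · rintro rfl
      simp
  rw [cD, hD, Finset.sum_singleton, Finset.card_empty, pow_zero]

lemma arith_inj1 {a j t : ℕ} (h1 : a + j = 3 * j * j) (h2 : a + t = 3 * t * t)
    (hj : 1 ≤ j) (ht : 1 ≤ t) : j = t := by
  rcases lt_trichotomy j t with h | h | h
  · nlinarith
  · exact h
  · nlinarith

lemma arith_inj2 {a j t : ℕ} (h1 : a = 3 * j * j + j) (h2 : a = 3 * t * t + t) : j = t := by
  rcases lt_trichotomy j t with h | h | h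
  · nlinarith
  · exact h
  · nlinarith

lemma arith_cross {a j t : ℕ} (h1 : a + j = 3 * j * j) (h2 : a = 3 * t * t + t)
    (hj : 1 ≤ j) : False := by
  rcases le_or_gt j t with h | h
  · nlinarith
  · nlinarith

lemma cD_pentM {n j : ℕ} (h : 2 * n + j = 3 * j * j) : cD n = (-1) ^ j := by
  rcases Nat.eq_zero_or_pos j with rfl | hj
  · have : n = 0 := by omega
    subst this
    simpa using cD_zero
  · have hn : 1 ≤ n := by nlinarith
    rw [cD_eq_exc hn]
    have hset : (D n).filter IsExc = {Finset.Icc j (2 * j - 1)} := by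
      apply Finset.ext; intro T
      simp only [Finset.mem_filter, Finset.mem_singleton]
      constructor
      · rintro ⟨hT, hE⟩
        obtain ⟨t, ht1, hcase⟩ := exc_eq hn hT hE
        rcases hcase with ⟨he, hTe⟩ | ⟨he, hTe⟩
        · rw [hTe, arith_inj1 he h ht1 hj]
        · exact absurd (arith_cross h he hj) (by simp)
      · rintro rfl
        refine ⟨Icc_mem_D hj (by omega) ?_, IsExc_Icc_type1 hj⟩
        have e1 : 2 * j - 1 + 1 - j = j := by omega
        have e2 : j + (2 * j - 1) = 3 * j - 1 := by omega
        rw [e1, e2]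
        have e3 : (3 * j - 1) * j + j = 3 * j * j := by
          have h4 : 3 * j - 1 + 1 = 3 * j := by omega
          calc (3 * j - 1) * j + j = (3 * j - 1 + 1) * j := by ring
          _ = 3 * j * j := by rw [h4]
        omega
    rw [hset, Finset.sum_singleton, Nat.card_Icc]
    congr 1
    omega

lemma cD_pentP {n j : ℕ} (h : 2 * n = 3 * j * j + j) : cD n = (-1) ^ j := by
  rcases Nat.eq_zero_or_pos j with rfl | hj
  · have : n = 0 := by omega
    subst this
    simpa using cD_zero
  · have hn : 1 ≤ n := by nlinarith
    rw [cD_eq_exc hn]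
    have hset : (D n).filter IsExc = {Finset.Icc (j + 1) (2 * j)} := by
      apply Finset.ext; intro T
      simp only [Finset.mem_filter, Finset.mem_singleton]
      constructor
      · rintro ⟨hT, hE⟩
        obtain ⟨t, ht1, hcase⟩ := exc_eq hn hT hE
        rcases hcase with ⟨he, hTe⟩ | ⟨he, hTe⟩
        · exact absurd (arith_cross he h ht1) (by simp)
        · rw [hTe, arith_inj2 he h]
      · rintro rfl
        refine ⟨Icc_mem_D (by omega) (by omega) ?_, IsExc_Icc_type2 hj⟩
        have e1 : 2 * j + 1 - (j + 1) = j := by omega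
        rw [e1]
        calc (j + 1 + 2 * j) * j = 3 * j * j + j := by ring
        _ = 2 * n := h.symm
    rw [hset, Finset.sum_singleton, Nat.card_Icc]
    congr 1
    omega

lemma cD_nonpent {n : ℕ} (hn : 1 ≤ n)
    (h : ∀ j, 1 ≤ j → ¬(2 * n + j = 3 * j * j) ∧ ¬(2 * n = 3 * j * j + j)) : cD n = 0 := by
  rw [cD_eq_exc hn]
  have hset : (D n).filter IsExc = ∅ := by
    apply Finset.eq_empty_of_forall_notMem
    intro T hT
    rw [Finset.mem_filter] at hT
    obtain ⟨t, ht1, hcase⟩ := exc_eq hn hT.1 hT.2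
    rcases hcase with ⟨he, _⟩ | ⟨he, _⟩
    · exact (h t ht1).1 he
    · exact (h t ht1).2 he
  rw [hset, Finset.sum_empty]


lemma coeff_E (d m : ℕ) (hd : 1 ≤ d) :
    (PowerSeries.coeff m) (E d) = if d ∣ m then cD (m / d) else 0 := by
  rw [E, PowerSeries.coeff_mk]
  have step1 : (PowerSeries.coeff m)
      (∏ k ∈ Finset.range (m + 1), (1 - (PowerSeries.X : PowerSeries ℤ) ^ (d * (k + 1))))
      = ∑ t ∈ (Finset.range (m + 1)).powerset,
          if m = ∑ k ∈ t, d * (k + 1) then (-1 : ℤ) ^ t.card else 0 := by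
    have hfactor : ∀ k ∈ Finset.range (m + 1),
        (1 - (PowerSeries.X : PowerSeries ℤ) ^ (d * (k + 1)))
        = (PowerSeries.C (-1 : ℤ)) * (PowerSeries.X : PowerSeries ℤ) ^ (d * (k + 1)) + 1 := by
      intro k _
      rw [map_neg, map_one]
      ring
    rw [Finset.prod_congr rfl hfactor, Finset.prod_add, map_sum]
    apply Finset.sum_congr rfl
    intro t _
    rw [Finset.prod_const_one, mul_one, Finset.prod_mul_distrib, Finset.prod_const,
      ← map_pow, Finset.prod_pow_eq_pow_sum, PowerSeries.coeff_C_mul,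
      PowerSeries.coeff_X_pow]
    simp only [mul_ite, mul_one, mul_zero]
  rw [step1]
  by_cases hdvd : d ∣ m
  · obtain ⟨q, rfl⟩ := hdvd
    simp only [if_pos (dvd_mul_right d q)]
    have hq : d * q / d = q := by
      rw [Nat.mul_div_cancel_left _ (by omega)]
    rw [hq]
    have step2 : ∀ t : Finset ℕ, (∑ k ∈ t, d * (k + 1)) = d * ∑ k ∈ t, (k + 1) := by
      intro t; rw [Finset.mul_sum]
    have step3 : ∑ t ∈ (Finset.range (d * q + 1)).powerset,
        (if d * q = ∑ k ∈ t, d * (k + 1) then (-1 : ℤ) ^ t.card else 0)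
        = ∑ t ∈ (Finset.range (d * q + 1)).powerset,
        (if (∑ k ∈ t, (k + 1)) = q then (-1 : ℤ) ^ t.card else 0) := by
      apply Finset.sum_congr rfl
      intro t _
      rw [step2]
      by_cases hc : (∑ k ∈ t, (k + 1)) = q
      · rw [if_pos (by rw [hc]), if_pos hc]
      · rw [if_neg (fun h => hc (Nat.eq_of_mul_eq_mul_left (by omega) h.symm)), if_neg hc]
    rw [step3, ← Finset.sum_filter]
    unfold cD
    apply Finset.sum_bij (i := fun t _ => t.image (· + 1))
    · -- maps into D q
      intro t ht
      rw [Finset.mem_filter, Finset.mem_powerset] at ht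
      obtain ⟨hsub, hsum⟩ := ht
      rw [mem_D]
      have hsumim : ∑ x ∈ t.image (· + 1), x = q := by
        rw [Finset.sum_image (by intro x _ y _ h; simp only at h; omega)]
        exact hsum
      constructor
      · intro x hx
        rw [Finset.mem_image] at hx
        obtain ⟨k, hk, rfl⟩ := hx
        rw [Finset.mem_Icc]
        constructor
        · show 1 ≤ k + 1
          omega
        · rw [← hsum]
          exact Finset.single_le_sum (f := fun k => k + 1) (fun i _ => Nat.zero_le _) hk
      · exact hsumim
    · -- injective
      intro t1 h1 t2 h2 heq
      exact Finset.image_injective (fun x y h => by simpa using h) heq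
    · -- surjective
      intro S hS
      rw [mem_D] at hS
      obtain ⟨hsub, hsum⟩ := hS
      have hone : ∀ x ∈ S, 1 ≤ x := by
        intro x hx
        have := hsub hx
        rw [Finset.mem_Icc] at this
        exact this.1
      refine ⟨S.image (· - 1), ?_, ?_⟩
      · rw [Finset.mem_filter, Finset.mem_powerset]
        have hsum2 : ∑ k ∈ S.image (· - 1), (k + 1) = q := by
          rw [Finset.sum_image (by intro x hx y hy h; simp only at h; have := hone x hx; have := hone y hy; omega)]
          rw [← hsum]
          apply Finset.sum_congr rfl
          intro x hx
          have := hone x hx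
          omega
        constructor
        · intro k hk
          rw [Finset.mem_image] at hk
          obtain ⟨x, hx, rfl⟩ := hk
          rw [Finset.mem_range]
          have hq2 : q ≤ d * q := Nat.le_mul_of_pos_left q (by omega)
          have h1 : x - 1 + 1 ≤ q := by
            rw [← hsum2]
            exact Finset.single_le_sum (f := fun k => k + 1) (fun i _ => Nat.zero_le _)
              (Finset.mem_image_of_mem _ hx)
          omega
        · exact hsum2
      · apply Finset.ext
        intro x
        rw [Finset.mem_image]
        constructor
        · rintro ⟨k, hk, rfl⟩
          rw [Finset.mem_image] at hk
          obtain ⟨y, hy, rfl⟩ := hk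
          have := hone y hy
          have : y - 1 + 1 = y := by omega
          rwa [this]
        · intro hx
          exact ⟨x - 1, Finset.mem_image_of_mem _ hx,
            by show x - 1 + 1 = x; have := hone x hx; omega⟩
    · -- values
      intro t ht
      rw [Finset.card_image_of_injective _ (fun x y h => by simpa using h)]
  · rw [if_neg hdvd]
    apply Finset.sum_eq_zero
    intro t _
    rw [if_neg]
    intro h
    exact hdvd ⟨∑ k ∈ t, (k + 1), by rw [h, Finset.mul_sum]⟩

lemma neg_one_pow_eq_neg {a b : ℕ} (h : (a + b) % 2 = 1) : ((-1 : ℤ)) ^ a = -(-1) ^ b := by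
  have h1 : ((-1 : ℤ)) ^ (a + b) = -1 := Odd.neg_one_pow (Nat.odd_iff.mpr h)
  rw [pow_add] at h1
  have h2 : ((-1 : ℤ)) ^ b * (-1) ^ b = 1 := by rw [← mul_pow]; norm_num
  calc ((-1 : ℤ)) ^ a = (-1) ^ a * ((-1) ^ b * (-1) ^ b) := by rw [h2, mul_one]
  _ = ((-1) ^ a * (-1) ^ b) * (-1) ^ b := by ring
  _ = -(-1) ^ b := by rw [h1]; ring

lemma mod7_pentM {m j : ℕ} (h : 2 * (7 * m + 2) + j = 3 * j * j) : j % 7 = 6 := by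
  have hc := congrArg (Nat.cast : ℕ → ZMod 7) h
  push_cast at hc
  have hz : 3 * (j : ZMod 7) * (j : ZMod 7) = (j : ZMod 7) + 4 := by
    have h7 : (7 : ZMod 7) = 0 := by decide
    linear_combination -hc + 2 * (m : ZMod 7) * h7
  have hd : ∀ x : ZMod 7, 3 * x * x = x + 4 → x = 6 := by decide
  have hj : (j : ZMod 7) = 6 := hd _ hz
  have h1 : (j : ZMod 7).val = j % 7 := ZMod.val_natCast 7 j
  rw [hj] at h1
  simpa [show (6 : ZMod 7).val = 6 from rfl] using h1.symm

lemma mod7_pentP {m j : ℕ} (h : 2 * (7 * m + 2) = 3 * j * j + j) : j % 7 = 1 := by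
  have hc := congrArg (Nat.cast : ℕ → ZMod 7) h
  push_cast at hc
  have hz : 3 * (j : ZMod 7) * (j : ZMod 7) + (j : ZMod 7) = 4 := by
    have h7 : (7 : ZMod 7) = 0 := by decide
    linear_combination -hc + 2 * (m : ZMod 7) * h7
  have hd : ∀ x : ZMod 7, 3 * x * x + x = 4 → x = 1 := by decide
  have hj : (j : ZMod 7) = 1 := hd _ hz
  have h1 : (j : ZMod 7).val = j % 7 := ZMod.val_natCast 7 j
  rw [hj] at h1
  simpa [show (1 : ZMod 7).val = 1 from rfl] using h1.symm

theorem cD_seven (m : ℕ) :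
    cD (7 * m + 2) = -(if 7 ∣ m then cD (m / 7) else 0) := by
  by_cases hM : ∃ j, 2 * (7 * m + 2) + j = 3 * j * j
  · obtain ⟨j, hj⟩ := hM
    have hmod := mod7_pentM hj
    obtain ⟨q, rfl⟩ : ∃ q, j = 7 * q + 6 := ⟨j / 7, by omega⟩
    have key : 3 * (7 * q + 6) * (7 * q + 6) + 42 * q + 39
        = 49 * (3 * (q + 1) * (q + 1)) := by ring
    have haux : (q + 1) * (3 * q + 2) + (q + 1) = 3 * (q + 1) * (q + 1) := by ring
    -- 14 m + 4 + 7q + 6 = 3(7q+6)^2 ; hence 2m = 7 (q+1)(3q+2)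
    have h2m : 2 * m = 7 * ((q + 1) * (3 * q + 2)) := by omega
    obtain ⟨M, hM2⟩ : ∃ M, (q + 1) * (3 * q + 2) = 2 * M := ⟨(q + 1) * (3 * q + 2) / 2, by omega⟩
    have hm7 : m = 7 * M := by omega
    have hdvd : 7 ∣ m := ⟨M, hm7⟩
    rw [if_pos hdvd]
    have hdiv : m / 7 = M := by omega
    rw [hdiv]
    have hMpent : 2 * M + (q + 1) = 3 * (q + 1) * (q + 1) := by omega
    rw [cD_pentM hj, cD_pentM hMpent]
    exact neg_one_pow_eq_neg (by omega)
  · by_cases hP : ∃ j, 2 * (7 * m + 2) = 3 * j * j + j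
    · obtain ⟨j, hj⟩ := hP
      have hmod := mod7_pentP hj
      obtain ⟨q, rfl⟩ : ∃ q, j = 7 * q + 1 := ⟨j / 7, by omega⟩
      have key : 3 * (7 * q + 1) * (7 * q + 1) + (7 * q + 1)
          = 49 * (3 * q * q + q) + 4 := by ring
      have h2m : 2 * m = 7 * (3 * q * q + q) := by omega
      obtain ⟨M, hM2⟩ : ∃ M, 3 * q * q + q = 2 * M := ⟨(3 * q * q + q) / 2, by omega⟩
      have hm7 : m = 7 * M := by omega
      rw [if_pos ⟨M, hm7⟩]
      have hdiv : m / 7 = M := by omega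
      rw [hdiv]
      have hMpent : 2 * M = 3 * q * q + q := by omega
      rw [cD_pentP hj, cD_pentP hMpent]
      exact neg_one_pow_eq_neg (by omega)
    · have hnon : cD (7 * m + 2) = 0 := by
        apply cD_nonpent (by omega)
        intro j hj1
        exact ⟨fun h => hM ⟨j, h⟩, fun h => hP ⟨j, h⟩⟩
      rw [hnon]
      by_cases hdvd : 7 ∣ m
      · obtain ⟨M, rfl⟩ := hdvd
        rw [if_pos ⟨M, rfl⟩]
        rcases Nat.eq_zero_or_pos M with rfl | hM1
        · exfalso
          exact hP ⟨1, by norm_num⟩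
        · have hdiv : 7 * M / 7 = M := by omega
          rw [hdiv]
          have : cD M = 0 := by
            apply cD_nonpent hM1
            intro t ht
            constructor
            · intro hcon
              apply hM
              obtain ⟨t', rfl⟩ : ∃ t', t = t' + 1 := ⟨t - 1, by omega⟩
              refine ⟨7 * t' + 6, ?_⟩
              have idt : 3 * (7 * t' + 6) * (7 * t' + 6) + 42 * t' + 39
                  = 49 * (3 * (t' + 1) * (t' + 1)) := by ring
              omega
            · intro hcon
              apply hP
              refine ⟨7 * t + 1, ?_⟩
              have idt : 3 * (7 * t + 1) * (7 * t + 1) + (7 * t + 1)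
                  = 49 * (3 * t * t + t) + 4 := by ring
              omega
          rw [this]
          norm_num
      · rw [if_neg hdvd]
        norm_num


end PentAux

/-- If `(q)_∞ = ∏_{k≥1}(1-q^k) = ∑ bₙ qⁿ`, then the residue-2 component of its
7-dissection satisfies `∑_{m≥0} b_{7m+2} q^m = -∏_{k≥1}(1 - q^{7k})`. -/
theorem eulerProd_seven_dissection_two :
    (PowerSeries.mk fun m => PowerSeries.coeff (7 * m + 2) (E 1)) = -(E 7) := by
  apply PowerSeries.ext
  intro m
  rw [PowerSeries.coeff_mk, map_neg]
  rw [PentAux.coeff_E 1 (7 * m + 2) (le_refl 1), PentAux.coeff_E 7 m (by omega)]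
  simp only [Nat.one_dvd, if_true, Nat.div_one]
  exact PentAux.cD_seven m
end

section
/- For every k ≥ 0, p(7k+5) ≡ 0 (mod 7). -/
/-!
Over `ZMod 7` put `E = ∏ (1 - X ^ (i + 1))` and `P = ∑ p(n) X ^ n`, so that `P * E = 1` and
hence `P = P ^ 7 * (E ^ 3) ^ 2`. In characteristic `7` the series `P ^ 7` only has exponents
divisible by `7`, and by Jacobi's identity `E ^ 3 = ∑ (-1) ^ j (2j + 1) X ^ (j(j+1)/2)`. Two
exponents `j(j+1)/2` and `j'(j'+1)/2` adding up to `5` modulo `7` give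
`(2j + 1) ^ 2 + (2j' + 1) ^ 2 ≡ 0`, and since `-1` is not a square modulo `7` this forces
`7 ∣ 2j + 1`; so every term contributing to the coefficient of `X ^ (7k + 5)` vanishes.

Jacobi's identity comes from the finite triple product `(1 + z) ∏_{i=1}^n (z + q^i)(1 + q^i z)`.
Substituting `z ↦ q^n z` turns it into `q^(n(n+1)/2) ∏_{i=0}^{2n} (1 + q^i z)`, whose
coefficients are given by the `q`-binomial theorem, while its derivative at `z = -1` is
`(-1)^n (q;q)_n^2`. Multiplying by `(q;q)_n` turns each term `q^(j(j+1)/2) [2n+1, n-j]_q` into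
`q^(j(j+1)/2)` modulo `q^(n+1)`.
-/

open Finset PowerSeries PowerSeries.WithPiTopology

theorem Finset.sum_range_add_one_eq_choose_two (n : ℕ) :
    ∑ i ∈ range n, (i + 1) = (n + 1).choose 2 := by
  induction n with
  | zero => rfl
  | succ n ih =>
    rw [sum_range_succ, ih, Nat.choose_succ_succ' (n + 1), Nat.choose_one_right, add_comm]

theorem Nat.le_add_one_choose_two (j : ℕ) : j ≤ (j + 1).choose 2 := by
  rw [Nat.choose_succ_succ', Nat.choose_one_right]
  exact Nat.le_add_right j _

theorem Finset.sum_range_two_mul_add_two {M : Type*} [AddCommMonoid M] (f : ℕ → M) (n : ℕ) :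
    ∑ t ∈ range (2 * n + 2), f t = ∑ j ∈ range (n + 1), (f (n - j) + f (n + 1 + j)) := by
  rw [show 2 * n + 2 = (n + 1) + (n + 1) by ring, sum_range_add, sum_add_distrib,
    ← sum_range_reflect f (n + 1)]
  simp

theorem Polynomial.coeff_mul_one_add_C_mul_X_succ {S : Type*} [CommRing S] (p : Polynomial S)
    (a : S) (k : ℕ) :
    (p * (1 + C a * X)).coeff (k + 1) = p.coeff (k + 1) + a * p.coeff k := by
  rw [mul_add, mul_one, coeff_add, mul_left_comm, coeff_C_mul, coeff_mul_X]

namespace PowerSeries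

variable {R : Type*} [CommRing R]

theorem smodEq_iff_coeff {k : ℕ} {f g : R⟦X⟧} :
    f ≡ g [SMOD Ideal.span {X ^ k}] ↔ ∀ d < k, coeff d f = coeff d g := by
  simp [SModEq.sub_mem, Ideal.mem_span_singleton, X_pow_dvd_iff, sub_eq_zero]

theorem smodEq_X_pow_of_le {f g : R⟦X⟧} {k l : ℕ} (hlk : l ≤ k)
    (h : f ≡ g [SMOD Ideal.span {X ^ k}]) : f ≡ g [SMOD Ideal.span {X ^ l}] :=
  h.mono (Ideal.span_singleton_le_span_singleton.mpr (pow_dvd_pow _ hlk))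

theorem X_pow_mul_smodEq {f g : R⟦X⟧} {k : ℕ} (e : ℕ)
    (h : f ≡ g [SMOD Ideal.span {X ^ k}]) :
    X ^ e * f ≡ X ^ e * g [SMOD Ideal.span {X ^ (e + k)}] := by
  rw [SModEq.sub_mem, Ideal.mem_span_singleton] at h ⊢
  rw [← mul_sub, pow_add]
  exact mul_dvd_mul_left _ h

theorem one_sub_X_pow_smodEq_one {k i : ℕ} (h : k ≤ i) :
    (1 - X ^ i : R⟦X⟧) ≡ 1 [SMOD Ideal.span {X ^ k}] := by
  rw [SModEq.sub_mem, sub_sub_cancel_left, Ideal.neg_mem_iff, Ideal.mem_span_singleton]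
  exact pow_dvd_pow _ h

theorem prod_Ico_one_sub_X_pow_smodEq_one (a b : ℕ) :
    ∏ i ∈ Ico a b, (1 - X ^ (i + 1) : R⟦X⟧) ≡ 1 [SMOD Ideal.span {X ^ (a + 1)}] := by
  have := SModEq.prod (s := Ico a b) (I := Ideal.span {(X : R⟦X⟧) ^ (a + 1)}) (y := fun _ ↦ 1)
    fun i hi ↦ one_sub_X_pow_smodEq_one (k := a + 1) (i := i + 1) (by simp at hi; omega)
  simpa using this

variable (R) in
/-- `(q;q)_n`, with `q = X`. -/
noncomputable def qPochhammer (n : ℕ) : R⟦X⟧ := ∏ i ∈ range n, (1 - X ^ (i + 1))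

@[simp] theorem qPochhammer_zero : qPochhammer R 0 = 1 := prod_range_zero _

theorem qPochhammer_succ (n : ℕ) :
    qPochhammer R (n + 1) = qPochhammer R n * (1 - X ^ (n + 1)) :=
  prod_range_succ _ _

theorem qPochhammer_mul_prod_Ico {a b : ℕ} (h : a ≤ b) :
    qPochhammer R a * ∏ i ∈ Ico a b, (1 - X ^ (i + 1)) = qPochhammer R b :=
  prod_range_mul_prod_Ico _ h

theorem isUnit_qPochhammer (n : ℕ) : IsUnit (qPochhammer R n) := by
  simp [qPochhammer, isUnit_iff_constantCoeff]

theorem qPochhammer_smodEq_of_le {n m : ℕ} (h : n ≤ m) :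
    qPochhammer R m ≡ qPochhammer R n [SMOD Ideal.span {X ^ (n + 1)}] := by
  have htail := (SModEq.rfl (x := qPochhammer R n)).mul
    (prod_Ico_one_sub_X_pow_smodEq_one (R := R) n m)
  rwa [mul_one, qPochhammer_mul_prod_Ico h] at htail

/-- Cancelling `qPochhammer R (2 * n + 1 - a)` from `h` leaves `c * qPochhammer R a` equal to
`X ^ e` times factors `1 - X ^ (i + 1)` with `i > n`; the remaining factors of `qPochhammer R n`
have `i ≥ a`, which `X ^ e` pushes beyond degree `n`. -/
theorem mul_qPochhammer_smodEq {c : R⟦X⟧} {n a e : ℕ} (ha : a ≤ n) (he : n ≤ e + a)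
    (h : c * qPochhammer R a * qPochhammer R (2 * n + 1 - a) = X ^ e * qPochhammer R (2 * n + 1)) :
    c * qPochhammer R n ≡ X ^ e [SMOD Ideal.span {X ^ (n + 1)}] := by
  set b := 2 * n + 1 - a
  have hcancel : c * qPochhammer R a = X ^ e * ∏ i ∈ Ico b (2 * n + 1), (1 - X ^ (i + 1)) := by
    refine (isUnit_qPochhammer b).mul_right_cancel ?_
    rw [h, ← qPochhammer_mul_prod_Ico (show b ≤ 2 * n + 1 by omega)]
    ring
  have htail := smodEq_X_pow_of_le (show n + 1 ≤ b + 1 by omega)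
    (prod_Ico_one_sub_X_pow_smodEq_one (R := R) b (2 * n + 1))
  have hhead := smodEq_X_pow_of_le (show n + 1 ≤ e + (a + 1) by omega)
    (X_pow_mul_smodEq e (prod_Ico_one_sub_X_pow_smodEq_one (R := R) a n))
  rw [← qPochhammer_mul_prod_Ico ha, ← mul_assoc, hcancel]
  have hprod := SModEq.mul (I := Ideal.span {(X : R⟦X⟧) ^ (n + 1)})
    (SModEq.mul (I := Ideal.span {(X : R⟦X⟧) ^ (n + 1)}) (SModEq.refl (X ^ e)) htail)
    (SModEq.refl (∏ i ∈ Ico a n, (1 - X ^ (i + 1))))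
  rw [mul_one] at hprod hhead
  exact hprod.trans hhead

variable (R) in
/-- `∏_{i<m} (1 + q^i z)` as a polynomial in `z = Polynomial.X` over `R⟦q⟧`. -/
noncomputable def qBinomialProd (m : ℕ) : Polynomial R⟦X⟧ :=
  ∏ i ∈ range m, (1 + Polynomial.C (X ^ i) * Polynomial.X)

theorem natDegree_qBinomialProd_le (m : ℕ) : (qBinomialProd R m).natDegree ≤ m := by
  refine (Polynomial.natDegree_prod_le _ _).trans ?_
  refine (sum_le_sum (g := fun _ ↦ 1) fun i _ ↦ ?_).trans (by simp)
  compute_degree!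

theorem coeff_qBinomialProd_zero (m : ℕ) : (qBinomialProd R m).coeff 0 = 1 := by
  simp [qBinomialProd, Polynomial.coeff_zero_eq_eval_zero, Polynomial.eval_prod]

/-- The `q`-binomial theorem `∏_{i<m} (1 + q^i z) = ∑_k q^(k choose 2) [m, k]_q z^k`, with the
denominators of the Gaussian binomial coefficient `[m, k]_q` cleared. -/
theorem coeff_qBinomialProd_mul {k m : ℕ} (h : k ≤ m) :
    (qBinomialProd R m).coeff k * qPochhammer R k * qPochhammer R (m - k) =
      X ^ k.choose 2 * qPochhammer R m := by
  induction m generalizing k with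
  | zero =>
    obtain rfl : k = 0 := by omega
    simp [coeff_qBinomialProd_zero]
  | succ m ih =>
    cases k with
    | zero => simp [coeff_qBinomialProd_zero]
    | succ k =>
      rw [qBinomialProd, prod_range_succ, ← qBinomialProd,
        Polynomial.coeff_mul_one_add_C_mul_X_succ, Nat.succ_sub_succ, qPochhammer_succ k,
        qPochhammer_succ m, Nat.choose_succ_succ', Nat.choose_one_right]
      have ih_k := ih (k := k) (by omega)
      rcases (show k + 1 ≤ m ∨ k = m by omega) with hk | rfl
      · have ih_k1 := ih hk
        obtain ⟨r, rfl⟩ : ∃ r, m = k + 1 + r := ⟨m - (k + 1), by omega⟩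
        rw [show k + 1 + r - k = r + 1 by omega, qPochhammer_succ r] at ih_k ⊢
        rw [show k + 1 + r - (k + 1) = r by omega, qPochhammer_succ k, Nat.choose_succ_succ',
          Nat.choose_one_right] at ih_k1
        linear_combination (1 - X ^ (r + 1)) * ih_k1 + X ^ (k + 1 + r) * (1 - X ^ (k + 1)) * ih_k
      · rw [Polynomial.coeff_eq_zero_of_natDegree_lt ((natDegree_qBinomialProd_le k).trans_lt
          (by omega))]
        simp only [Nat.sub_self, qPochhammer_zero, mul_one] at ih_k ⊢
        linear_combination X ^ k * (1 - X ^ (k + 1)) * ih_k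

variable (R) in
noncomputable def jacobiTripleProd (n : ℕ) : Polynomial R⟦X⟧ :=
  (1 + Polynomial.X) * ∏ i ∈ range n,
    (Polynomial.X + Polynomial.C (X ^ (i + 1))) * (1 + Polynomial.C (X ^ (i + 1)) * Polynomial.X)

theorem natDegree_jacobiTripleProd_le (n : ℕ) :
    (jacobiTripleProd R n).natDegree ≤ 2 * n + 1 := by
  refine Polynomial.natDegree_mul_le.trans ?_
  have hprod : (∏ i ∈ range n, (Polynomial.X + Polynomial.C (X ^ (i + 1) : R⟦X⟧)) *
      (1 + Polynomial.C (X ^ (i + 1)) * Polynomial.X)).natDegree ≤ 2 * n := by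
    refine (Polynomial.natDegree_prod_le _ _).trans ?_
    refine (sum_le_sum (g := fun _ ↦ 2) fun i _ ↦ ?_).trans (by simp [mul_comm])
    compute_degree!
  have hlin : (1 + Polynomial.X : Polynomial R⟦X⟧).natDegree ≤ 1 := by compute_degree!
  omega

theorem jacobiTripleProd_comp (n : ℕ) :
    (jacobiTripleProd R n).comp (Polynomial.C (X ^ n) * Polynomial.X) =
      Polynomial.C (X ^ (n + 1).choose 2) * qBinomialProd R (2 * n + 1) := by
  set f : ℕ → Polynomial R⟦X⟧ := fun i ↦ 1 + Polynomial.C (X ^ i) * Polynomial.X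
  have hsplit : qBinomialProd R (2 * n + 1) =
      f n * (∏ i ∈ range n, f (n - 1 - i)) * ∏ i ∈ range n, f (n + 1 + i) := by
    rw [qBinomialProd, show 2 * n + 1 = n + 1 + n by ring, prod_range_add, prod_range_succ,
      prod_range_reflect f n]
    ring
  have hfactor : ∀ i ∈ range n,
      (Polynomial.C (X ^ n) * Polynomial.X + Polynomial.C (X ^ (i + 1)) : Polynomial R⟦X⟧) =
        Polynomial.C (X ^ (i + 1)) * f (n - 1 - i) := by
    intro i hi
    have : (X : R⟦X⟧) ^ n = X ^ (i + 1) * X ^ (n - 1 - i) := by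
      rw [← pow_add]; congr 1; simp at hi; omega
    simp only [f, this, Polynomial.C_mul]
    ring
  have hshift : ∀ i ∈ range n, (1 + Polynomial.C (X ^ (i + 1)) * (Polynomial.C (X ^ n) *
      Polynomial.X) : Polynomial R⟦X⟧) = f (n + 1 + i) := fun i _ ↦ by
    rw [← mul_assoc, ← Polynomial.C_mul, ← pow_add, show i + 1 + n = n + 1 + i by ring]
  rw [hsplit, ← sum_range_add_one_eq_choose_two, ← prod_pow_eq_pow_sum, map_prod,
    jacobiTripleProd, Polynomial.mul_comp, Polynomial.prod_comp]
  simp only [Polynomial.mul_comp, Polynomial.add_comp, Polynomial.X_comp, Polynomial.C_comp,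
    Polynomial.one_comp]
  rw [prod_congr rfl fun i hi ↦ by rw [hfactor i hi, hshift i hi], prod_mul_distrib,
    prod_mul_distrib]
  ring

theorem coeff_jacobiTripleProd_mul {n t : ℕ} (ht : t ≤ 2 * n + 1) :
    X ^ (n * t) *
        ((jacobiTripleProd R n).coeff t * qPochhammer R t * qPochhammer R (2 * n + 1 - t)) =
      X ^ ((n + 1).choose 2 + t.choose 2) * qPochhammer R (2 * n + 1) := by
  have hcoeff := congrArg (Polynomial.coeff · t) (jacobiTripleProd_comp (R := R) n)
  simp only [Polynomial.comp_C_mul_X_coeff, Polynomial.coeff_C_mul, ← pow_mul] at hcoeff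
  linear_combination (qPochhammer R t * qPochhammer R (2 * n + 1 - t)) * hcoeff +
    X ^ (n + 1).choose 2 * coeff_qBinomialProd_mul (R := R) ht

theorem coeff_jacobiTripleProd_mul_qPochhammer_smodEq {n j t : ℕ} (hj : j ≤ n)
    (ht : t = n - j ∨ t = n + 1 + j) :
    (jacobiTripleProd R n).coeff t * qPochhammer R n ≡ X ^ (j + 1).choose 2
      [SMOD Ideal.span {X ^ (n + 1)}] := by
  have hj2 := Nat.le_add_one_choose_two j
  refine mul_qPochhammer_smodEq (a := n - j) (by omega) (by omega)
    (X_pow_mul_cancel (k := n * t) ?_)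
  have hmul := coeff_jacobiTripleProd_mul (R := R) (n := n) (t := t) (by omega)
  rw [← mul_assoc (X ^ _) (X ^ _), ← pow_add]
  rcases ht with rfl | rfl
  · rw [show n * (n - j) + (j + 1).choose 2 = (n + 1).choose 2 + (n - j).choose 2 by
      obtain ⟨r, rfl⟩ : ∃ r, n = j + r := ⟨n - j, by omega⟩
      rw [Nat.add_sub_cancel_left]
      qify [Nat.cast_choose_two]
      ring, ← hmul]
  · rw [show n * (n + 1 + j) + (j + 1).choose 2 = (n + 1).choose 2 + (n + 1 + j).choose 2 by
      qify [Nat.cast_choose_two]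
      ring, ← hmul, show 2 * n + 1 - (n + 1 + j) = n - j by omega,
      show 2 * n + 1 - (n - j) = n + 1 + j by omega]
    ring

/-- `jacobiTripleProd R n` is `1 + z` times a cofactor, so its derivative at `z = -1` is the value
of the cofactor there, `(-1) ^ n * qPochhammer R n ^ 2`. -/
theorem sum_range_neg_one_pow_mul_coeff_jacobiTripleProd (n : ℕ) :
    ∑ t ∈ range (2 * n + 2), (-1) ^ t * t * (jacobiTripleProd R n).coeff t =
      (-1) ^ (n + 1) * qPochhammer R n ^ 2 := by
  have hcofactor : ∀ i ∈ range n, ((Polynomial.X + Polynomial.C (X ^ (i + 1) : R⟦X⟧)) *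
      (1 + Polynomial.C (X ^ (i + 1)) * Polynomial.X)).eval (-1) = -1 * (1 - X ^ (i + 1)) ^ 2 :=
    fun i _ ↦ by simp; ring
  have hderiv : (Polynomial.derivative (jacobiTripleProd R n)).eval (-1) =
      (-1) ^ n * qPochhammer R n ^ 2 := by
    rw [jacobiTripleProd, Polynomial.derivative_mul]
    simp only [Polynomial.derivative_add, Polynomial.derivative_one, Polynomial.derivative_X,
      Polynomial.eval_add, Polynomial.eval_mul, Polynomial.eval_one, Polynomial.eval_X,
      Polynomial.eval_zero]
    rw [Polynomial.eval_prod, prod_congr rfl hcofactor, prod_mul_distrib, prod_const, card_range,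
      prod_pow, qPochhammer]
    ring
  have hdeg : (Polynomial.derivative (jacobiTripleProd R n)).natDegree < 2 * n + 1 :=
    (Polynomial.natDegree_derivative_le _).trans_lt
      (by have := natDegree_jacobiTripleProd_le (R := R) n; omega)
  rw [Polynomial.eval_eq_sum_range' hdeg] at hderiv
  rw [sum_range_succ', Nat.cast_zero, mul_zero, zero_mul, add_zero, pow_succ, mul_comm _ (-1),
    mul_assoc, ← hderiv, mul_sum]
  refine sum_congr rfl fun t _ ↦ ?_
  rw [Polynomial.coeff_derivative]
  push_cast
  ring

theorem qPochhammer_pow_three_smodEq (n : ℕ) :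
    qPochhammer R n ^ 3 ≡
      ∑ j ∈ range (n + 1), (-1) ^ j * (2 * j + 1 : R⟦X⟧) * X ^ (j + 1).choose 2
      [SMOD Ideal.span {X ^ (n + 1)}] := by
  have hcube : qPochhammer R n ^ 3 = ∑ t ∈ range (2 * n + 2),
      (-1) ^ (n + 1) * ((-1) ^ t * t * ((jacobiTripleProd R n).coeff t * qPochhammer R n)) := by
    have hsq : (-1 : R⟦X⟧) ^ (n + 1) * (-1) ^ (n + 1) = 1 := by rw [← mul_pow]; simp
    have hsum : ∑ t ∈ range (2 * n + 2),
        (-1) ^ t * t * ((jacobiTripleProd R n).coeff t * qPochhammer R n) =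
        (-1) ^ (n + 1) * qPochhammer R n ^ 2 * qPochhammer R n := by
      rw [← sum_range_neg_one_pow_mul_coeff_jacobiTripleProd, sum_mul]
      exact sum_congr rfl fun _ _ ↦ by ring
    rw [← mul_sum, hsum]
    linear_combination -qPochhammer R n ^ 3 * hsq
  rw [hcube, sum_range_two_mul_add_two]
  refine SModEq.sum fun j hj ↦ ?_
  have hj : j ≤ n := by simp at hj; omega
  have hleft := coeff_jacobiTripleProd_mul_qPochhammer_smodEq (R := R) hj (Or.inl rfl)
  have hright := coeff_jacobiTripleProd_mul_qPochhammer_smodEq (R := R) hj (Or.inr rfl)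
  have hcombine : (-1) ^ j * (2 * j + 1 : R⟦X⟧) * X ^ (j + 1).choose 2 =
      (-1) ^ (n + 1) * ((-1) ^ (n - j) * ((n - j : ℕ) : R⟦X⟧) * X ^ (j + 1).choose 2) +
        (-1) ^ (n + 1) *
          ((-1) ^ (n + 1 + j) * ((n + 1 + j : ℕ) : R⟦X⟧) * X ^ (j + 1).choose 2) := by
    obtain ⟨r, rfl⟩ : ∃ r, n = j + r := ⟨n - j, by omega⟩
    have hsr : (-1 : R⟦X⟧) ^ r * (-1) ^ r = 1 := by rw [← mul_pow]; simp
    have hsj : (-1 : R⟦X⟧) ^ j * (-1) ^ j = 1 := by rw [← mul_pow]; simp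
    rw [Nat.add_sub_cancel_left]
    push_cast
    linear_combination ((-1) ^ j * r - (-1) ^ j * (-1) ^ j * (-1) ^ j * (2 * j + r + 1)) *
      X ^ (j + 1).choose 2 * hsr - (-1) ^ j * (2 * j + r + 1) * X ^ (j + 1).choose 2 * hsj
  rw [hcombine]
  exact (SModEq.rfl.mul (SModEq.rfl.mul hleft)).add (SModEq.rfl.mul (SModEq.rfl.mul hright))

variable (R) in
noncomputable def jacobiSeries : R⟦X⟧ :=
  mk fun d ↦ ∑ j ∈ range (d + 1), if d = (j + 1).choose 2 then (-1) ^ j * (2 * j + 1) else 0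

theorem sum_range_smodEq_jacobiSeries (n : ℕ) :
    ∑ j ∈ range (n + 1), (-1) ^ j * (2 * j + 1 : R⟦X⟧) * X ^ (j + 1).choose 2 ≡
      jacobiSeries R [SMOD Ideal.span {X ^ (n + 1)}] := by
  rw [smodEq_iff_coeff]
  intro d hd
  have hC : ∀ j : ℕ, (-1) ^ j * (2 * j + 1 : R⟦X⟧) = C ((-1 : R) ^ j * (2 * j + 1)) := by
    simp [map_ofNat C 2]
  simp only [hC, map_sum, coeff_C_mul_X_pow, jacobiSeries, coeff_mk]
  refine (sum_subset (range_subset_range.mpr (by omega)) fun j _ hj ↦ ?_).symm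
  have := Nat.le_add_one_choose_two j
  rw [if_neg (by simp at hj; omega)]

theorem pentagonalSeries_smodEq_qPochhammer (n : ℕ) :
    pentagonalSeries R ≡ qPochhammer R n [SMOD Ideal.span {X ^ (n + 1)}] := by
  rw [smodEq_iff_coeff]
  intro d hd
  obtain ⟨m, hm, hnm⟩ := ((Filter.tendsto_finset_range.eventually
    (coeff_prod_one_sub_X_pow_eventually_eq R d)).and (Filter.eventually_ge_atTop n)).exists
  rw [← hm]
  exact smodEq_iff_coeff.mp (qPochhammer_smodEq_of_le hnm) d hd

/-- Jacobi's identity. -/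
theorem tprod_one_sub_X_pow_pow_three [TopologicalSpace R] [T2Space R] :
    (∏' i, (1 - X ^ (i + 1) : R⟦X⟧)) ^ 3 = jacobiSeries R := by
  rw [tprod_one_sub_X_pow]
  ext d
  have h := (((pentagonalSeries_smodEq_qPochhammer (R := R) d).pow 3).trans
    (qPochhammer_pow_three_smodEq d)).trans (sum_range_smodEq_jacobiSeries (R := R) d)
  exact smodEq_iff_coeff.mp h d (lt_add_one d)

variable (R) in
noncomputable def partitionSeries : R⟦X⟧ := mk fun n ↦ (Fintype.card n.Partition : R)

theorem coeff_partitionSeries (n : ℕ) :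
    coeff n (partitionSeries R) = Fintype.card n.Partition :=
  coeff_mk _ _

theorem partitionSeries_mul_tprod_one_sub_X_pow [TopologicalSpace R] [T2Space R]
    [IsTopologicalRing R] : partitionSeries R * ∏' i, (1 - X ^ (i + 1)) = 1 := by
  have hP := Nat.Partition.hasProd_powerSeriesMk_card_restricted R (fun _ ↦ True)
  have hE := (multipliable_one_sub_X_pow R).hasProd
  have hterm (i : ℕ) :
      (if True then ∑' j : ℕ, X ^ ((i + 1) * j) else 1) * (1 - X ^ (i + 1) : R⟦X⟧) = 1 := by
    simp only [if_true, pow_mul]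
    exact tsum_pow_mul_one_sub_of_constantCoeff_eq_zero (by simp)
  have hprod := hP.mul hE
  simp only [hterm] at hprod
  convert hprod.unique hasProd_one using 3
  simp [partitionSeries, Nat.Partition.restricted]

/-- Truncation reduces this to polynomials, where `g ^ p` is `g` expanded by `X ↦ X ^ p` with
Frobenius applied to the coefficients. -/
theorem coeff_pow_char_eq_zero (p : ℕ) [Fact p.Prime] [CharP R p] (f : R⟦X⟧) {d : ℕ}
    (hd : ¬ p ∣ d) : coeff d (f ^ p) = 0 := by
  have htrunc : coeff d (f ^ p) = ((trunc (d + 1) f) ^ p).coeff d := by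
    rw [← Polynomial.coeff_coe, Polynomial.coe_pow, ← coeff_coe_trunc_of_lt (lt_add_one d),
      ← trunc_trunc_pow, coeff_coe_trunc_of_lt (lt_add_one d)]
  rw [htrunc, ← Polynomial.map_frobenius_expand p, Polynomial.coeff_map,
    Polynomial.coeff_expand (Fact.out : p.Prime).pos, if_neg hd, map_zero]

theorem coeff_pow_char_mul_eq_zero (p : ℕ) [Fact p.Prime] [CharP R p] (f g : R⟦X⟧) {r d : ℕ}
    (hg : ∀ b, b % p = r → coeff b g = 0) (hd : d % p = r) : coeff d (f ^ p * g) = 0 := by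
  rw [coeff_mul]
  refine sum_eq_zero fun ⟨a, b⟩ hab ↦ ?_
  rw [HasAntidiagonal.mem_antidiagonal] at hab
  by_cases ha : p ∣ a
  · obtain ⟨c, rfl⟩ := ha
    rw [← hab, Nat.mul_add_mod] at hd
    rw [hg b hd, mul_zero]
  · rw [coeff_pow_char_eq_zero p f ha, zero_mul]

/-- `(2j + 1) ^ 2 = 8 * (j + 1).choose 2 + 1`, and `x ^ 2 + y ^ 2 = 0` forces `x = 0` in `ZMod 7`
because `-1` is not a square there. -/
theorem two_mul_add_one_eq_zero_of_choose_two_add_mod_seven {j j' : ℕ}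
    (h : ((j + 1).choose 2 + (j' + 1).choose 2) % 7 = 5) : (2 * j + 1 : ZMod 7) = 0 := by
  have hsq : ∀ i : ℕ, (2 * i + 1) ^ 2 = 8 * (i + 1).choose 2 + 1 := fun i ↦ by
    qify [Nat.cast_choose_two]
    ring
  have h5 : (((j + 1).choose 2 + (j' + 1).choose 2 : ℕ) : ZMod 7) = 5 := by
    rw [← ZMod.natCast_mod, h]
    rfl
  have hsum : ((2 * j + 1 : ℕ) : ZMod 7) ^ 2 + ((2 * j' + 1 : ℕ) : ZMod 7) ^ 2 = 0 := by
    rw [← Nat.cast_pow, ← Nat.cast_pow, hsq, hsq]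
    push_cast at h5 ⊢
    linear_combination 8 * h5 + (by decide : (42 : ZMod 7) = 0)
  have hsq_sum : ∀ x y : ZMod 7, x ^ 2 + y ^ 2 = 0 → x = 0 := by decide
  exact_mod_cast hsq_sum _ _ hsum

theorem coeff_jacobiSeries_sq_eq_zero {d : ℕ} (hd : d % 7 = 5) :
    coeff d (jacobiSeries (ZMod 7) ^ 2) = 0 := by
  rw [sq, coeff_mul]
  refine sum_eq_zero fun ⟨u, v⟩ huv ↦ ?_
  rw [HasAntidiagonal.mem_antidiagonal] at huv
  simp only [jacobiSeries, coeff_mk, sum_mul_sum]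
  refine sum_eq_zero fun j _ ↦ sum_eq_zero fun j' _ ↦ ?_
  split_ifs with hu hv
  · rw [two_mul_add_one_eq_zero_of_choose_two_add_mod_seven (j' := j') (by omega)]
    ring
  all_goals simp

end PowerSeries

/-- Ramanujan's congruence modulo 7: for every `k ≥ 0`, `p(7k+5) ≡ 0 (mod 7)`. -/
theorem partition_seven_congruence (k : ℕ) :
    7 ∣ Fintype.card (Nat.Partition (7 * k + 5)) := by
  have : Fact (Nat.Prime 7) := ⟨by norm_num⟩
  set P := partitionSeries (ZMod 7)
  set E : (ZMod 7)⟦X⟧ := ∏' i, (1 - X ^ (i + 1))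
  have hPE : P * E = 1 := partitionSeries_mul_tprod_one_sub_X_pow
  have hE : E ^ 3 = jacobiSeries (ZMod 7) := tprod_one_sub_X_pow_pow_three
  have hP : P = P ^ 7 * jacobiSeries (ZMod 7) ^ 2 := by
    calc P = P * (P * E) ^ 6 := by rw [hPE, one_pow, mul_one]
      _ = P ^ 7 * (E ^ 3) ^ 2 := by ring
      _ = P ^ 7 * jacobiSeries (ZMod 7) ^ 2 := by rw [hE]
  have hcoeff : coeff (7 * k + 5) (P ^ 7 * jacobiSeries (ZMod 7) ^ 2) = 0 :=
    coeff_pow_char_mul_eq_zero 7 P _ (fun _ ↦ coeff_jacobiSeries_sq_eq_zero) (by omega)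
  rw [← hP, coeff_partitionSeries] at hcoeff
  exact (ZMod.natCast_eq_zero_iff _ 7).mp hcoeff
end

section
/- For any N ≥ 1 and any residue a with 0 ≤ a < N, p(kN + a) equals the determinant of the (k+1)×(k+1) matrix with (i,j) entry D_{i-j} for j ≤ i < k (0 for j > i, j < k) and last column (Z_0^{(a)}, …, Z_k^{(a)})^T, where D_m and Z_m^{(a)} are defined by ∏_{j=1}^{N-1}(ω^j q)_∞ · (q)_∞ = ∑_m D_m q^{mN} and ∏_{j=1}^{N-1}(ω^j q)_∞ = ∑_{p=0}^{N-1} ∑_m Z_m^{(p)} q^{mN+p}, with ω = e^{2πi/N}. In particular Z_0^{(a)} = p(a) and D_0 = 1. -/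
/-!
Let `F = ∏_{j<N} (ω^j q)_∞`, `G = ∏_{0<j<N} (ω^j q)_∞` and `P = ∑ p(n) qⁿ`. Euler's identity
`(q)_∞ · P = 1` gives `G = F · P`, and `∏_{j<N} (1 - ω^j y) = 1 - y^N` turns `F` into
`(q^N; q^N)_∞`, a series in `q^N`. Comparing coefficients of `q^{mN+a}` in `G = F · P` gives the
triangular system `Z_m^{(a)} = ∑_{s ≤ m} D_s p((m-s)N + a)` with `D_0 = 1`, which Cramer's rule
solves for `p(kN + a)`.
-/

open PowerSeries Finset

/-- `(x q)_∞ = ∏_{k≥1} (1 - x q^k)` as a formal power series in `q` over `ℂ`: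
its `m`-th coefficient is that of the partial product `∏_{k=1}^{m+1} (1 - x q^k)`,
which stabilizes since the omitted factors only affect degrees `> m`. -/
noncomputable def xqProd (x : ℂ) : PowerSeries ℂ :=
  PowerSeries.mk fun m =>
    PowerSeries.coeff (R := ℂ) m
      (∏ k ∈ Finset.range (m + 1),
        (1 - PowerSeries.C (R := ℂ) x * (PowerSeries.X : PowerSeries ℂ) ^ (k + 1)))

namespace Matrix

theorem det_updateCol_mulVec {n R : Type*} [Fintype n] [DecidableEq n] [CommRing R]
    (A : Matrix n n R) (v : n → R) (i : n) :
    (A.updateCol i (A *ᵥ v)).det = A.det * v i := by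
  rw [← cramer_apply, cramer_eq_adjugate_mulVec, mulVec_mulVec, adjugate_mul, smul_mulVec,
    one_mulVec, Pi.smul_apply, smul_eq_mul]

theorem det_lowerToeplitz_lastCol_convolution {R : Type*} [CommRing R] (D u : ℕ → R)
    (hD : D 0 = 1) (k : ℕ) :
    det (fun i j : Fin (k + 1) =>
      if (j : ℕ) = k then ∑ s ∈ range (i + 1), D s * u (i - s)
      else if (j : ℕ) ≤ i then D (i - j) else 0) = u k := by
  set A : Matrix (Fin (k + 1)) (Fin (k + 1)) R := fun i j => if (j : ℕ) ≤ i then D (i - j) else 0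
  have hA : A.det = 1 := by
    rw [det_of_isLowerTriangular A fun i j hij => if_neg (not_le.2 hij)]
    simp [A, hD]
  have hAu (i : Fin (k + 1)) : (A *ᵥ fun l => u l) i = ∑ s ∈ range (i + 1), D s * u (i - s) := by
    simp only [mulVec, dotProduct, A]
    rw [Fin.sum_univ_eq_sum_range (fun l => (if l ≤ (i : ℕ) then D (i - l) else 0) * u l),
      ← sum_range_reflect (fun s => D s * u (i - s)), ← sum_subset (range_subset_range.2 i.isLt)
        fun l _ hl => by rw [if_neg (by simpa using hl), zero_mul]]
    refine sum_congr rfl fun l hl => ?_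
    have hli : l < i + 1 := mem_range.1 hl
    rw [if_pos (by omega), show (i : ℕ) + 1 - 1 - l = i - l by omega, Nat.sub_sub_self (by omega)]
  have hM : (fun i j : Fin (k + 1) =>
      if (j : ℕ) = k then ∑ s ∈ range (i + 1), D s * u (i - s)
      else if (j : ℕ) ≤ i then D (i - j) else 0) = A.updateCol (Fin.last k) (A *ᵥ fun l => u l) := by
    funext i j
    rw [updateCol_apply]
    by_cases hj : j = Fin.last k
    · rw [if_pos hj, hAu, if_pos (by simp [hj])]
    · rw [if_neg hj, if_neg fun h => hj (Fin.ext (by simpa using h))]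
  rw [hM, det_updateCol_mulVec, hA, one_mul, Fin.val_last]

end Matrix

namespace IsPrimitiveRoot

variable {R : Type*} [CommRing R] [IsDomain R] {ζ : R} {N : ℕ} [NeZero N]

theorem nthRootsFinset_one_eq_image [DecidableEq R] (h : IsPrimitiveRoot ζ N) :
    Polynomial.nthRootsFinset N (1 : R) = (range N).image (ζ ^ ·) := by
  ext z
  simp only [Polynomial.mem_nthRootsFinset (NeZero.pos N), mem_image, mem_range]
  refine ⟨h.eq_pow_of_pow_eq_one, ?_⟩
  rintro ⟨j, -, rfl⟩
  rw [← pow_mul, mul_comm, pow_mul, h.pow_eq_one, one_pow]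

theorem prod_range_sub_pow_mul (h : IsPrimitiveRoot ζ N) (x y : R) :
    ∏ j ∈ range N, (x - ζ ^ j * y) = x ^ N - y ^ N := by
  classical
  rw [h.pow_sub_pow_eq_prod_sub_mul x y (NeZero.pos N), h.nthRootsFinset_one_eq_image,
    prod_image fun i hi j hj => h.pow_inj (mem_range.1 hi) (mem_range.1 hj)]

end IsPrimitiveRoot

namespace PowerSeries

open WithPiTopology

variable {R : Type*} [CommRing R]

theorem X_pow_dvd_mul_sub_one {n : ℕ} {f g : R⟦X⟧} (hf : X ^ n ∣ f - 1)
    (hg : X ^ n ∣ g - 1) : X ^ n ∣ f * g - 1 := by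
  have := (dvd_mul_of_dvd_left hf g).add hg
  rwa [sub_mul, one_mul, sub_add_sub_cancel] at this

theorem coeff_mul_of_X_pow_dvd_sub_one {d : ℕ} {f g : R⟦X⟧} (hg : X ^ (d + 1) ∣ g - 1) :
    coeff d (g * f) = coeff d f := by
  obtain ⟨h, hh⟩ := hg
  rw [show g * f = f + X ^ (d + 1) * (h * f) by linear_combination f * hh, map_add,
    coeff_X_pow_mul', if_neg (by omega), add_zero]

theorem coeff_prod_of_X_pow_dvd_sub_one {ι : Type*} [DecidableEq ι] {s t : Finset ι}
    (hts : t ⊆ s) (f : ι → R⟦X⟧) {d : ℕ} (h : ∀ i ∈ s \ t, X ^ (d + 1) ∣ f i - 1) :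
    coeff d (∏ i ∈ s, f i) = coeff d (∏ i ∈ t, f i) := by
  rw [← prod_sdiff hts]
  exact coeff_mul_of_X_pow_dvd_sub_one
    (prod_induction f (fun g => X ^ (d + 1) ∣ g - 1) (fun _ _ => X_pow_dvd_mul_sub_one)
      (by simp) h)

theorem continuous_expand [TopologicalSpace R] (p : ℕ) (hp : p ≠ 0) :
    Continuous (expand p hp : R⟦X⟧ → R⟦X⟧) := by
  refine continuous_iff_continuousAt.2 fun f => (tendsto_iff_coeff_tendsto _ _ _ _).2 fun d => ?_
  simp_rw [coeff_expand]
  split_ifs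
  · exact (continuous_coeff R _).continuousAt
  · exact tendsto_const_nhds

theorem coeff_expand_mul_add {N : ℕ} (hN : N ≠ 0) (f g : R⟦X⟧) {a : ℕ} (ha : a < N) (m : ℕ) :
    coeff (m * N + a) (expand N hN f * g) =
      ∑ s ∈ range (m + 1), coeff s f * coeff ((m - s) * N + a) g := by
  rw [coeff_mul, Nat.sum_antidiagonal_eq_sum_range_succ_mk]
  simp_rw [coeff_expand, ite_mul, zero_mul]
  rw [← sum_filter]
  have hmul : Function.Injective (· * N) := mul_left_injective₀ hN
  rw [show (range (m * N + a + 1)).filter (N ∣ ·) = (range (m + 1)).map ⟨_, hmul⟩ from ?_,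
    sum_map]
  · refine sum_congr rfl fun s hs => ?_
    have hsN : s * N ≤ m * N := Nat.mul_le_mul_right N (Nat.lt_succ_iff.1 (mem_range.1 hs))
    simp only [Function.Embedding.coeFn_mk, Nat.mul_div_cancel _ (Nat.pos_of_ne_zero hN)]
    rw [show m * N + a - s * N = (m - s) * N + a by rw [Nat.sub_mul]; omega]
  · ext i
    simp only [mem_filter, mem_range, mem_map, Function.Embedding.coeFn_mk]
    constructor
    · rintro ⟨hi, t, rfl⟩
      refine ⟨t, ?_, mul_comm t N⟩
      by_contra! ht
      have htN : N * (m + 1) ≤ N * t := Nat.mul_le_mul_left N ht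
      nlinarith
    · rintro ⟨s, hs, rfl⟩
      refine ⟨?_, dvd_mul_left N s⟩
      have hsN : s * N ≤ m * N := Nat.mul_le_mul_right N (Nat.lt_succ_iff.1 hs)
      omega

theorem tprod_one_sub_X_pow_mul_mk_card_partition [TopologicalSpace R] [IsTopologicalRing R]
    [T2Space R] :
    (∏' i, (1 - X ^ (i + 1) : R⟦X⟧)) * mk (fun n => (Fintype.card n.Partition : R)) = 1 := by
  have h := (multipliable_one_sub_X_pow R).hasProd.mul
    (Nat.Partition.hasProd_powerSeriesMk_card_restricted R fun _ => True)
  have hall (n : ℕ) : Nat.Partition.restricted n (fun _ => True) = univ :=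
    filter_true_of_mem fun _ _ _ _ => trivial
  simp only [if_true, hall, card_univ] at h
  refine h.unique ?_
  convert hasProd_one with i
  simp_rw [pow_mul]
  exact one_sub_mul_tsum_pow_of_constantCoeff_eq_zero (by simp)

end PowerSeries

section xqProd

open PowerSeries.WithPiTopology

theorem hasProd_xqProd (x : ℂ) : HasProd (fun k => 1 - C x * X ^ (k + 1)) (xqProd x) := by
  rw [HasProd, tendsto_iff_coeff_tendsto]
  refine fun d => tendsto_atTop_of_eventually_const fun s (hs : range (d + 1) ≤ s) => ?_
  rw [xqProd, coeff_mk]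
  refine coeff_prod_of_X_pow_dvd_sub_one hs _ fun k hk => ?_
  have hk : d + 1 ≤ k + 1 := by simp only [mem_sdiff, mem_range] at hk; omega
  rw [sub_sub_cancel_left]
  exact ((pow_dvd_pow X hk).mul_left _).neg_right

theorem xqProd_one_mul_mk_card_partition :
    xqProd 1 * mk (fun n => (Fintype.card n.Partition : ℂ)) = 1 := by
  rw [← (hasProd_xqProd 1).tprod_eq]
  simpa using tprod_one_sub_X_pow_mul_mk_card_partition (R := ℂ)

/-- Both sides are infinite products of the factors `1 - X ^ ((k + 1) * N)`. -/
theorem prod_xqProd_pow_eq_expand {ω : ℂ} {N : ℕ} [NeZero N] (hω : IsPrimitiveRoot ω N) :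
    ∏ j ∈ range N, xqProd (ω ^ j) = expand N (NeZero.ne N) (xqProd 1) := by
  have hC : IsPrimitiveRoot (C ω : ℂ⟦X⟧) N := hω.map_of_injective C_injective
  refine (hasProd_prod fun j _ => hasProd_xqProd (ω ^ j)).unique ?_
  convert (hasProd_xqProd 1).map (expand N (NeZero.ne N)) (continuous_expand N _) with k
  simp only [Function.comp_apply, map_pow, map_one, one_mul, map_sub, expand_X]
  rw [hC.prod_range_sub_pow_mul, one_pow, ← pow_mul, ← pow_mul, mul_comm]

end xqProd

/-- For `N ≥ 1`, `ω = e^{2πi/N}` and `0 ≤ a < N`, with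
`∏_{j=0}^{N-1} (ω^j q)_∞ = ∑_m D_m q^{mN}` and
`∏_{j=1}^{N-1} (ω^j q)_∞ = ∑_{p=0}^{N-1} ∑_m Z_m^{(p)} q^{mN+p}`,
one has `D₀ = 1`, `Z₀^{(a)} = p(a)`, and `p(kN + a)` equals the determinant of the
`(k+1) × (k+1)` matrix with `(i,j)` entry `D_{i-j}` for `j ≤ i` (and `0` for `j > i`)
in columns `j < k`, and last column `(Z₀^{(a)}, …, Z_k^{(a)})ᵀ`. -/
theorem partition_general_det (N : ℕ) (hN : 1 ≤ N) (a : ℕ) (ha : a < N) :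
    let ω : ℂ := Complex.exp (2 * Real.pi * Complex.I / N)
    let D : ℕ → ℂ := fun m => PowerSeries.coeff (R := ℂ) (m * N) (∏ j ∈ Finset.range N, xqProd (ω ^ j))
    let Z : ℕ → ℕ → ℂ := fun m p =>
      PowerSeries.coeff (R := ℂ) (m * N + p) (∏ j ∈ Finset.Ico 1 N, xqProd (ω ^ j))
    D 0 = 1 ∧ Z 0 a = (Fintype.card (Nat.Partition a) : ℂ) ∧
      ∀ k : ℕ,
        (Fintype.card (Nat.Partition (k * N + a)) : ℂ) =
          Matrix.det (fun i j : Fin (k + 1) =>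
            if (j : ℕ) = k then Z (i : ℕ) a
            else if (j : ℕ) ≤ (i : ℕ) then D ((i : ℕ) - (j : ℕ))
            else 0) := by
  intro ω D Z
  have : NeZero N := ⟨by omega⟩
  have hω : IsPrimitiveRoot ω N := Complex.isPrimitiveRoot_exp N (NeZero.ne N)
  have hF := prod_xqProd_pow_eq_expand hω
  have hG : ∏ j ∈ Ico 1 N, xqProd (ω ^ j) =
      expand N (NeZero.ne N) (xqProd 1) * mk fun n => (Fintype.card n.Partition : ℂ) := by
    rw [← hF, prod_range_eq_mul_Ico _ (NeZero.pos N), pow_zero, mul_comm (xqProd 1), mul_assoc,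
      xqProd_one_mul_mk_card_partition, mul_one]
  have hD (s : ℕ) : D s = coeff s (xqProd 1) := by
    simp only [D, hF, mul_comm s N, coeff_expand_mul]
  have hZ (m : ℕ) :
      Z m a = ∑ s ∈ range (m + 1), D s * Fintype.card ((m - s) * N + a).Partition := by
    simp only [Z, hG, coeff_expand_mul_add _ _ _ ha, hD, coeff_mk]
  have hD0 : D 0 = 1 := by simp [hD, xqProd]
  refine ⟨hD0, by simp [hZ, hD0], fun k => ?_⟩
  simp only [hZ]
  exact (Matrix.det_lowerToeplitz_lastCol_convolution D
    (fun n => (Fintype.card (n * N + a).Partition : ℂ)) hD0 k).symm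
end
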